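/- arXiv:1906.04930 — 3 statements merged into one kernel-verified Lean document; each statement's English description precedes it below -/
import Mathlib

section
/- The process M_n = a_n·S_n, n ≥ 1, where a_n = Γ(p−q+1)·Γ(n)/Γ(n+p−q), is a martingale with respect to the filtration G_n = σ(X_1,…,X_n). -/
open MeasureTheory ProbabilityTheory Filter Real
open scoped ENNReal NNReal Topology Classical

noncomputable section

/-- The σ-algebra `σ(X_1, …, X_n)` generated by the first `n` steps. -/
def sigmaUpTo {Ω : Type*} (X : ℕ → Ω → ℝ) (n : ℕ) : MeasurableSpace Ω :=
  MeasurableSpace.comap (fun ω (k : Fin n) => X ((k : ℕ) + 1) ω) inferInstance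

/-- Weak convergence of a sequence of measures on `ℝ` (convergence in distribution):
integrals of every bounded continuous function converge. -/
def TendstoInDist (μs : ℕ → Measure ℝ) (ν : Measure ℝ) : Prop :=
  ∀ f : BoundedContinuousFunction ℝ ℝ,
    Tendsto (fun n => ∫ x, f x ∂(μs n)) atTop (𝓝 (∫ x, f x ∂ν))

/-!
Write `Sₙ = X₁ + ⋯ + Xₙ` and `N±ₙ` for the number of steps `±1` up to time `n`, so that
`Sₙ = N⁺ₙ - N⁻ₙ`. Since `X_{n+1} = 1{X_{n+1} = 1} - 1{X_{n+1} = -1}`, the two prescribed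
conditional probabilities give the drift `E(X_{n+1} ∣ 𝒢ₙ) = (p - q) Sₙ / n`, hence
`E(S_{n+1} ∣ 𝒢ₙ) = (n + p - q) / n · Sₙ`. The functional equation `Γ(x + 1) = x Γ(x)` turns
this factor into `aₙ / a_{n+1}`.
-/

lemma Gamma_div_Gamma_add_succ_mul {x c : ℝ} (hx : x ≠ 0) (hxc : 0 < x + c) :
    Gamma (x + 1) / Gamma (x + 1 + c) * (x + c) = Gamma x / Gamma (x + c) * x := by
  have hΓ : Gamma (x + c) ≠ 0 := (Gamma_pos_of_pos hxc).ne'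
  rw [Gamma_add_one hx, add_right_comm, Gamma_add_one hxc.ne']
  field_simp

lemma erwd_scale_succ_mul {p q : ℝ} (hpq : 0 < p - q + 1) {a : ℕ → ℝ}
    (ha : ∀ n : ℕ, 1 ≤ n →
      a n = Gamma (p - q + 1) * Gamma (n : ℝ) / Gamma ((n : ℝ) + p - q))
    {n : ℕ} (hn : 1 ≤ n) : a (n + 1) * ((n : ℝ) + p - q) = a n * n := by
  have hn' : (1 : ℝ) ≤ n := by exact_mod_cast hn
  have key := Gamma_div_Gamma_add_succ_mul (x := n) (c := p - q) (by positivity) (by linarith)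
  rw [ha n hn, ha (n + 1) (by omega), mul_div_assoc, mul_div_assoc, mul_assoc, mul_assoc]
  push_cast
  simp only [add_sub_assoc] at key ⊢
  rw [key]

lemma eq_ite_sub_ite_of_ternary {x : ℝ} (hx : x = 1 ∨ x = -1 ∨ x = 0) :
    x = (if x = 1 then 1 else 0) - (if x = -1 then 1 else 0) := by
  rcases hx with rfl | rfl | rfl <;> norm_num

lemma Finset.sum_eq_card_sub_card_of_ternary {ι : Type*} {s : Finset ι} {f : ι → ℝ}
    (hf : ∀ i ∈ s, f i = 1 ∨ f i = -1 ∨ f i = 0) :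
    ∑ i ∈ s, f i
      = ((s.filter (fun i => f i = 1)).card : ℝ) - (s.filter (fun i => f i = -1)).card := by
  rw [Finset.sum_congr rfl fun i hi => eq_ite_sub_ite_of_ternary (hf i hi),
    Finset.sum_sub_distrib, Finset.sum_boole, Finset.sum_boole]

section Ternary

variable {Ω : Type*} {Y : Ω → ℝ}

lemma eq_indicator_sub_indicator_of_ternary (hY : ∀ ω, Y ω = 1 ∨ Y ω = -1 ∨ Y ω = 0) :
    Y = {ω | Y ω = 1}.indicator (fun _ => (1 : ℝ))
      - {ω | Y ω = -1}.indicator (fun _ => (1 : ℝ)) := by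
  funext ω
  simpa [Set.indicator_apply] using eq_ite_sub_ite_of_ternary (hY ω)

variable {mΩ : MeasurableSpace Ω} {P : Measure Ω} [IsFiniteMeasure P]

lemma integrable_indicator_setOf_eq (hY : Measurable Y) (y : ℝ) :
    Integrable ({ω | Y ω = y}.indicator (fun _ => (1 : ℝ))) P :=
  (integrable_const (1 : ℝ)).indicator (hY (measurableSet_singleton y))

lemma integrable_of_ternary (hY : Measurable Y) (hYval : ∀ ω, Y ω = 1 ∨ Y ω = -1 ∨ Y ω = 0) :
    Integrable Y P := by
  rw [eq_indicator_sub_indicator_of_ternary hYval]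
  exact (integrable_indicator_setOf_eq hY 1).sub (integrable_indicator_setOf_eq hY (-1))

lemma condExp_ae_eq_sub_of_ternary (hY : Measurable Y)
    (hYval : ∀ ω, Y ω = 1 ∨ Y ω = -1 ∨ Y ω = 0) (m : MeasurableSpace Ω) :
    P[Y | m] =ᵐ[P] P[{ω | Y ω = 1}.indicator (fun _ => (1 : ℝ)) | m]
      - P[{ω | Y ω = -1}.indicator (fun _ => (1 : ℝ)) | m] := by
  conv_lhs => rw [eq_indicator_sub_indicator_of_ternary hYval]
  exact condExp_sub (integrable_indicator_setOf_eq hY 1)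
    (integrable_indicator_setOf_eq hY (-1)) m

end Ternary

section Walk

variable {Ω : Type*} {X : ℕ → Ω → ℝ}

def partialSum (X : ℕ → Ω → ℝ) (n : ℕ) (ω : Ω) : ℝ := ∑ k ∈ Finset.Icc 1 n, X k ω

lemma partialSum_succ (n : ℕ) : partialSum X (n + 1) = partialSum X n + X (n + 1) := by
  funext ω
  exact Finset.sum_Icc_succ_top (by omega) _

lemma partialSum_eq_card_sub_card (hXval : ∀ n, 1 ≤ n → ∀ ω, X n ω = 1 ∨ X n ω = -1 ∨ X n ω = 0)
    (n : ℕ) (ω : Ω) :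
    partialSum X n ω = (((Finset.Icc 1 n).filter (fun k => X k ω = 1)).card : ℝ)
      - ((Finset.Icc 1 n).filter (fun k => X k ω = -1)).card :=
  Finset.sum_eq_card_sub_card_of_ternary fun k hk => hXval k (Finset.mem_Icc.1 hk).1 ω

lemma measurable_sigmaUpTo {n k : ℕ} (hk : 1 ≤ k) (hkn : k ≤ n) :
    Measurable[sigmaUpTo X n] (X k) := by
  have hproj := (measurable_pi_apply (⟨k - 1, by omega⟩ : Fin n)).comp
    (Measurable.of_comap_le le_rfl : Measurable[sigmaUpTo X n] fun ω (j : Fin n) => X (j + 1) ω)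
  simpa [Function.comp_def, Nat.sub_add_cancel hk] using hproj

lemma measurable_partialSum_sigmaUpTo (n : ℕ) : Measurable[sigmaUpTo X n] (partialSum X n) :=
  Finset.measurable_sum _ fun _ hk =>
    measurable_sigmaUpTo (Finset.mem_Icc.1 hk).1 (Finset.mem_Icc.1 hk).2

variable [MeasurableSpace Ω]

lemma sigmaUpTo_le (hX : ∀ n, Measurable (X n)) (n : ℕ) : sigmaUpTo X n ≤ ‹MeasurableSpace Ω› :=
  Measurable.comap_le (measurable_pi_lambda _ fun _ => hX _)

variable {P : Measure Ω} [IsFiniteMeasure P]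
  (hXmeas : ∀ n, Measurable (X n))
  (hXval : ∀ n, 1 ≤ n → ∀ ω, X n ω = 1 ∨ X n ω = -1 ∨ X n ω = 0)
include hXmeas hXval

lemma integrable_partialSum (n : ℕ) : Integrable (partialSum X n) P :=
  integrable_finsetSum _ fun k hk =>
    integrable_of_ternary (hXmeas k) (hXval k (Finset.mem_Icc.1 hk).1)

lemma condExp_step_ae_eq_drift {p q : ℝ} {n : ℕ} (hn : 1 ≤ n)
    (hcondp : P[Set.indicator {ω | X (n + 1) ω = 1} (fun _ => (1 : ℝ)) | sigmaUpTo X n]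
        =ᵐ[P] fun ω =>
          (p * (((Finset.Icc 1 n).filter (fun k => X k ω = 1)).card : ℝ)
            + q * (((Finset.Icc 1 n).filter (fun k => X k ω = -1)).card : ℝ)) / n)
    (hcondq : P[Set.indicator {ω | X (n + 1) ω = -1} (fun _ => (1 : ℝ)) | sigmaUpTo X n]
        =ᵐ[P] fun ω =>
          (q * (((Finset.Icc 1 n).filter (fun k => X k ω = 1)).card : ℝ)
            + p * (((Finset.Icc 1 n).filter (fun k => X k ω = -1)).card : ℝ)) / n) :
    P[X (n + 1) | sigmaUpTo X n] =ᵐ[P] fun ω => (p - q) / n * partialSum X n ω := by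
  filter_upwards [condExp_ae_eq_sub_of_ternary (hXmeas (n + 1))
    (hXval (n + 1) (by omega)) (sigmaUpTo X n), hcondp, hcondq] with ω hsub hpω hqω
  rw [hsub, Pi.sub_apply, hpω, hqω, partialSum_eq_card_sub_card hXval]
  ring

end Walk

theorem erwd_full_memory_martingale_general
    {Ω : Type*} [MeasurableSpace Ω] (P : Measure Ω) [IsProbabilityMeasure P]
    (p q : ℝ) (hp : 0 < p) (hq1 : q < 1)
    (X : ℕ → Ω → ℝ) (hXmeas : ∀ n, Measurable (X n))
    (hXval : ∀ n, 1 ≤ n → ∀ ω, X n ω = 1 ∨ X n ω = -1 ∨ X n ω = 0)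
    (hcondp : ∀ n : ℕ, 1 ≤ n →
      P[Set.indicator {ω | X (n + 1) ω = 1} (fun _ => (1 : ℝ)) | sigmaUpTo X n]
        =ᵐ[P] fun ω =>
          (p * (((Finset.Icc 1 n).filter (fun k => X k ω = 1)).card : ℝ)
            + q * (((Finset.Icc 1 n).filter (fun k => X k ω = -1)).card : ℝ)) / n)
    (hcondq : ∀ n : ℕ, 1 ≤ n →
      P[Set.indicator {ω | X (n + 1) ω = -1} (fun _ => (1 : ℝ)) | sigmaUpTo X n]
        =ᵐ[P] fun ω =>
          (q * (((Finset.Icc 1 n).filter (fun k => X k ω = 1)).card : ℝ)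
            + p * (((Finset.Icc 1 n).filter (fun k => X k ω = -1)).card : ℝ)) / n)
    (a : ℕ → ℝ)
    (ha : ∀ n : ℕ, 1 ≤ n →
      a n = Real.Gamma (p - q + 1) * Real.Gamma (n : ℝ) / Real.Gamma ((n : ℝ) + p - q))
    (M : ℕ → Ω → ℝ) (hM : ∀ n ω, M n ω = a n * ∑ k ∈ Finset.Icc 1 n, X k ω) :
    (∀ n : ℕ, 1 ≤ n → Integrable (M n) P) ∧
    (∀ n : ℕ, 1 ≤ n → StronglyMeasurable[sigmaUpTo X n] (M n)) ∧
    (∀ n : ℕ, 1 ≤ n → P[M (n + 1) | sigmaUpTo X n] =ᵐ[P] M n) := by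
  have hMS : ∀ n, M n = a n • partialSum X n := fun n => funext (hM n)
  refine ⟨fun n _ => ?_, fun n _ => ?_, fun n hn => ?_⟩
  · rw [hMS]
    exact (integrable_partialSum hXmeas hXval n).smul (a n)
  · rw [hMS]
    exact ((measurable_partialSum_sigmaUpTo n).const_smul (a n)).stronglyMeasurable
  have hS : P[partialSum X n | sigmaUpTo X n] = partialSum X n :=
    condExp_of_stronglyMeasurable (sigmaUpTo_le hXmeas n)
      (measurable_partialSum_sigmaUpTo n).stronglyMeasurable (integrable_partialSum hXmeas hXval n)
  have hscale := erwd_scale_succ_mul (by linarith only [hp, hq1]) ha hn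
  have hn0 : (n : ℝ) ≠ 0 := by positivity
  filter_upwards [condExp_smul (a (n + 1)) (partialSum X (n + 1)) (sigmaUpTo X n),
    condExp_add (integrable_partialSum hXmeas hXval n)
      (integrable_of_ternary (hXmeas (n + 1)) (hXval (n + 1) (by omega))) (sigmaUpTo X n),
    condExp_step_ae_eq_drift hXmeas hXval hn (hcondp n hn) (hcondq n hn)]
    with ω hsmul hadd hdrift
  rw [hMS, hMS, hsmul, partialSum_succ, Pi.smul_apply, hadd, Pi.add_apply, hS, hdrift,
    Pi.smul_apply, smul_eq_mul, smul_eq_mul]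
  field_simp
  linear_combination partialSum X n ω * hscale

/-- `Mₙ = aₙ·Sₙ` with `aₙ = Γ(p−q+1)·Γ(n)/Γ(n+p−q)` is a martingale with
respect to the filtration `𝒢ₙ = σ(X₁,…,Xₙ)`: it is integrable, adapted, and satisfies
the martingale property `E(M_{n+1} ∣ 𝒢ₙ) = Mₙ` a.s. -/
theorem erwd_full_memory_martingale
    {Ω : Type*} [MeasurableSpace Ω] (P : Measure Ω) [IsProbabilityMeasure P]
    (p q r : ℝ) (hp : 0 < p) (hp1 : p < 1) (hq : 0 < q) (hq1 : q < 1)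
    (hr : 0 < r) (hr1 : r < 1) (hpqr : p + q + r = 1)
    (X : ℕ → Ω → ℝ) (hXmeas : ∀ n, Measurable (X n))
    (hXval : ∀ n, 1 ≤ n → ∀ ω, X n ω = 1 ∨ X n ω = -1 ∨ X n ω = 0)
    (hX1p : P {ω | X 1 ω = 1} = ENNReal.ofReal p)
    (hX1q : P {ω | X 1 ω = -1} = ENNReal.ofReal q)
    (hX1r : P {ω | X 1 ω = 0} = ENNReal.ofReal r)
    (hcondp : ∀ n : ℕ, 1 ≤ n →
      P[Set.indicator {ω | X (n + 1) ω = 1} (fun _ => (1 : ℝ)) | sigmaUpTo X n]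
        =ᵐ[P] fun ω =>
          (p * (((Finset.Icc 1 n).filter (fun k => X k ω = 1)).card : ℝ)
            + q * (((Finset.Icc 1 n).filter (fun k => X k ω = -1)).card : ℝ)) / n)
    (hcondq : ∀ n : ℕ, 1 ≤ n →
      P[Set.indicator {ω | X (n + 1) ω = -1} (fun _ => (1 : ℝ)) | sigmaUpTo X n]
        =ᵐ[P] fun ω =>
          (q * (((Finset.Icc 1 n).filter (fun k => X k ω = 1)).card : ℝ)
            + p * (((Finset.Icc 1 n).filter (fun k => X k ω = -1)).card : ℝ)) / n)
    (a : ℕ → ℝ)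
    (ha : ∀ n : ℕ, 1 ≤ n →
      a n = Real.Gamma (p - q + 1) * Real.Gamma (n : ℝ) / Real.Gamma ((n : ℝ) + p - q))
    (M : ℕ → Ω → ℝ) (hM : ∀ n ω, M n ω = a n * ∑ k ∈ Finset.Icc 1 n, X k ω) :
    (∀ n : ℕ, 1 ≤ n → Integrable (M n) P) ∧
    (∀ n : ℕ, 1 ≤ n → StronglyMeasurable[sigmaUpTo X n] (M n)) ∧
    (∀ n : ℕ, 1 ≤ n → P[M (n + 1) | sigmaUpTo X n] =ᵐ[P] M n) :=
  erwd_full_memory_martingale_general P p q hp hq1 X hXmeas hXval hcondp hcondq a ha M hM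
end
end

section
/- Let p, q be real numbers with 0 < p, q < 1, set a_n = Γ(p−q+1)·Γ(n)/Γ(n+p−q) for n ≥ 1, and ν_n = Σ_{k=1}^n a_k². Then: (i) if p − q < 1/2, then ν_n / n^{1−2(p−q)} → (Γ(p−q+1))² / (1 − 2(p−q)) as n → ∞; (ii) if p − q = 1/2, then ν_n / log n → π/4 as n → ∞; (iii) if p − q > 1/2, then the sequence (ν_n) is bounded. -/
/-!
With `r = p - q`, Euler's limit formula for `Γ` gives `Γ(n) n^r / Γ(n + r) → 1`, so
`a_n² n^{2r} → Γ(r + 1)²`. For `2r < 1` (resp. `2r = 1`) compare `a_n²` with the increments of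
`x^{1 - 2r}` (resp. `log x`): by differentiability of these functions at `1` the ratio has a
limit, and a Stolz–Cesàro argument transfers it to the ratio of the partial sums, which telescope.
For `2r > 1` the series `∑ a_n²` converges by comparison with `∑ n^{-2r}`.
-/

open Filter Real Finset
open scoped Topology

namespace Real

theorem prod_range_add_natCast_eq_Gamma_div {s : ℝ} (hs : 0 < s) (n : ℕ) :
    ∏ j ∈ range n, (s + j) = Gamma (s + n) / Gamma s := by
  induction n with
  | zero => simp [(Gamma_pos_of_pos hs).ne']
  | succ n ih =>
    rw [prod_range_succ, ih, Nat.cast_succ, ← add_assoc, Gamma_add_one (by positivity)]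
    ring

theorem GammaSeq_add_one_eq {r : ℝ} (hr : -1 < r) {n : ℕ} (hn : n ≠ 0) :
    GammaSeq (r + 1) n =
      Gamma (r + 1) * (Gamma n * (n : ℝ) ^ r / Gamma (n + r)) * (n / (n + r)) *
        (n / (n + (r + 1))) := by
  have hn' : (1 : ℝ) ≤ n := by exact_mod_cast Nat.one_le_iff_ne_zero.mpr hn
  have hnr : 0 < (n : ℝ) + r := by linarith
  rw [GammaSeq, prod_range_add_natCast_eq_Gamma_div (by linarith), Nat.cast_succ,
    show r + 1 + (n + 1) = (n + r) + 1 + 1 by ring, Gamma_add_one (by positivity),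
    Gamma_add_one hnr.ne', ← Gamma_nat_eq_factorial, Gamma_add_one (by positivity),
    rpow_add_one (by positivity)]
  have := (Gamma_pos_of_pos hnr).ne'
  have := (Gamma_pos_of_pos (show 0 < r + 1 by linarith)).ne'
  have : (n : ℝ) + (r + 1) ≠ 0 := by linarith
  field_simp
  ring

theorem tendsto_Gamma_mul_rpow_div_Gamma_add {r : ℝ} (hr : -1 < r) :
    Tendsto (fun n : ℕ => Gamma n * (n : ℝ) ^ r / Gamma (n + r)) atTop (𝓝 1) := by
  have hΓ : Gamma (r + 1) ≠ 0 := (Gamma_pos_of_pos (by linarith)).ne'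
  have h := ((((GammaSeq_tendsto_Gamma (r + 1)).div_const (Gamma (r + 1))).div
    (tendsto_natCast_div_add_atTop r) one_ne_zero).div
    (tendsto_natCast_div_add_atTop (r + 1)) one_ne_zero)
  rw [div_self hΓ, div_one, div_one] at h
  refine h.congr' ?_
  filter_upwards [eventually_ne_atTop 0] with n hn
  have : (1 : ℝ) ≤ n := by exact_mod_cast Nat.one_le_iff_ne_zero.mpr hn
  simp only [Pi.div_apply]
  rw [GammaSeq_add_one_eq hr hn]
  have : (n : ℝ) + r ≠ 0 := by linarith
  have : (n : ℝ) + (r + 1) ≠ 0 := by linarith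
  field_simp

end Real

theorem Filter.Tendsto.sum_range_div_sum_range {f g : ℕ → ℝ} {l : ℝ}
    (h : Tendsto (fun n => f n / g n) atTop (𝓝 l)) (hg : 0 ≤ g)
    (hg_ne : ∀ᶠ n in atTop, g n ≠ 0)
    (hg_sum : Tendsto (fun n => ∑ i ∈ range n, g i) atTop atTop) :
    Tendsto (fun n => (∑ i ∈ range n, f i) / ∑ i ∈ range n, g i) atTop (𝓝 l) := by
  have h_small : (fun n => f n - l * g n) =o[atTop] g := by
    rw [Asymptotics.isLittleO_iff_tendsto' (hg_ne.mono fun n hn h => absurd h hn)]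
    refine (sub_self l ▸ h.sub_const l).congr' ?_
    filter_upwards [hg_ne] with n hn
    field_simp
  have h_sum := (h_small.sum_range hg hg_sum).tendsto_div_nhds_zero.add_const l
  rw [zero_add] at h_sum
  refine h_sum.congr' ?_
  filter_upwards [hg_sum.eventually_gt_atTop 0] with n hn
  rw [sum_sub_distrib, ← mul_sum]
  field_simp
  ring

theorem HasDerivAt.tendsto_succ_mul_sub_div_succ {f : ℝ → ℝ} {d : ℝ} (hf : HasDerivAt f d 1) :
    Tendsto (fun n : ℕ => ((n : ℝ) + 1) * (f 1 - f (n / (n + 1)))) atTop (𝓝 d) := by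
  have h_ne : ∀ n : ℕ, (n : ℝ) / (n + 1) ≠ 1 := fun n h => by
    rw [div_eq_one_iff_eq (by positivity)] at h
    linarith
  have h_lim : Tendsto (fun n : ℕ => (n : ℝ) / (n + 1)) atTop (𝓝[≠] 1) :=
    tendsto_nhdsWithin_of_tendsto_nhds_of_eventually_within _
      (tendsto_natCast_div_add_atTop 1) (Eventually.of_forall h_ne)
  refine ((hasDerivAt_iff_tendsto_slope.mp hf).comp h_lim).congr fun n => ?_
  have : (n : ℝ) + 1 ≠ 0 := by positivity
  rw [Function.comp_apply, slope_def_field]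
  field_simp
  ring

theorem tendsto_rpow_succ_sub_rpow_mul (t : ℝ) :
    Tendsto (fun i : ℕ => (((i : ℝ) + 1) ^ t - (i : ℝ) ^ t) * ((i : ℝ) + 1) ^ (1 - t)) atTop
      (𝓝 t) := by
  have hf : HasDerivAt (fun x : ℝ => x ^ t) t 1 := by
    simpa using hasDerivAt_rpow_const (x := 1) (p := t) (Or.inl one_ne_zero)
  refine hf.tendsto_succ_mul_sub_div_succ.congr fun i => ?_
  have hi : (0 : ℝ) < i + 1 := by positivity
  rw [one_rpow, div_rpow (Nat.cast_nonneg i) hi.le, rpow_sub hi, rpow_one]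
  field_simp

theorem tendsto_log_succ_sub_log_mul :
    Tendsto (fun i : ℕ => (log ((i : ℝ) + 1) - log i) * ((i : ℝ) + 1)) atTop (𝓝 1) := by
  have hf : HasDerivAt log 1 1 := by simpa using hasDerivAt_log one_ne_zero
  refine hf.tendsto_succ_mul_sub_div_succ.congr' ?_
  filter_upwards [eventually_ne_atTop 0] with i hi
  rw [log_one, log_div (by positivity) (by positivity)]
  ring

theorem tendsto_sum_range_div_rpow {f : ℕ → ℝ} {s L : ℝ} (hs : s < 1)
    (hf : Tendsto (fun i : ℕ => f i * ((i : ℝ) + 1) ^ s) atTop (𝓝 L)) :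
    Tendsto (fun n : ℕ => (∑ i ∈ range n, f i) / (n : ℝ) ^ (1 - s)) atTop
      (𝓝 (L / (1 - s))) := by
  have ht : 0 < 1 - s := by linarith
  set g : ℕ → ℝ := fun i => ((i : ℝ) + 1) ^ (1 - s) - (i : ℝ) ^ (1 - s)
  have hg_pos : ∀ i, 0 < g i := fun i =>
    sub_pos.mpr (rpow_lt_rpow i.cast_nonneg (lt_add_one _) ht)
  have hg_sum : ∀ n : ℕ, ∑ i ∈ range n, g i = (n : ℝ) ^ (1 - s) := fun n => by
    have := sum_range_sub (fun i : ℕ => (i : ℝ) ^ (1 - s)) n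
    push_cast [zero_rpow ht.ne', sub_zero] at this
    exact this
  have h_ratio : Tendsto (fun i => f i / g i) atTop (𝓝 (L / (1 - s))) := by
    have hg := tendsto_rpow_succ_sub_rpow_mul (1 - s)
    rw [sub_sub_cancel] at hg
    refine (hf.div hg ht.ne').congr fun i => ?_
    exact mul_div_mul_right _ _ (rpow_pos_of_pos (by positivity) s).ne'
  have := h_ratio.sum_range_div_sum_range (fun i => (hg_pos i).le)
    (Eventually.of_forall fun i => (hg_pos i).ne')
    (by simpa only [hg_sum, Function.comp_def] using
      (tendsto_rpow_atTop ht).comp tendsto_natCast_atTop_atTop)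
  simpa only [hg_sum] using this

theorem tendsto_sum_range_div_log {f : ℕ → ℝ} {L : ℝ}
    (hf : Tendsto (fun i : ℕ => f i * ((i : ℝ) + 1)) atTop (𝓝 L)) :
    Tendsto (fun n : ℕ => (∑ i ∈ range n, f i) / log n) atTop (𝓝 L) := by
  set g : ℕ → ℝ := fun i => log ((i : ℝ) + 1) - log i
  have hg_nonneg : ∀ i, 0 ≤ g i := fun i => by
    rcases Nat.eq_zero_or_pos i with rfl | hi
    · simp [g]
    · exact sub_nonneg.mpr (log_le_log (by positivity) (by linarith))
  have hg_ne : ∀ᶠ i in atTop, g i ≠ 0 := by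
    filter_upwards [eventually_ne_atTop 0] with i hi
    exact (sub_pos.mpr (log_lt_log (by positivity) (lt_add_one _))).ne'
  have hg_sum : ∀ n : ℕ, ∑ i ∈ range n, g i = log n := fun n => by
    have := sum_range_sub (fun i : ℕ => log i) n
    push_cast [log_zero, sub_zero] at this
    exact this
  have h_ratio : Tendsto (fun i => f i / g i) atTop (𝓝 L) := by
    refine (div_one L ▸ hf.div tendsto_log_succ_sub_log_mul one_ne_zero).congr fun i => ?_
    exact mul_div_mul_right _ _ (by positivity)
  have := h_ratio.sum_range_div_sum_range hg_nonneg hg_ne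
    (by simpa only [hg_sum, Function.comp_def] using
      tendsto_log_atTop.comp tendsto_natCast_atTop_atTop)
  simpa only [hg_sum] using this

theorem summable_of_tendsto_mul_rpow {f : ℕ → ℝ} {s L : ℝ} (hs : 1 < s)
    (hf : Tendsto (fun i : ℕ => f i * ((i : ℝ) + 1) ^ s) atTop (𝓝 L)) : Summable f := by
  have h_summable : Summable fun i : ℕ => ((i : ℝ) + 1) ^ (-s) := by
    simpa using (summable_nat_add_iff 1).mpr (summable_nat_rpow.mpr (neg_lt_neg hs))
  refine summable_of_isBigO_nat h_summable ?_
  refine ((hf.isBigO_one ℝ).mul (Asymptotics.isBigO_refl _ _)).congr (fun i => ?_)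
    fun i => one_mul _
  rw [mul_assoc, ← rpow_add (by positivity), add_neg_cancel, rpow_zero, mul_one]

theorem nu_asymptotics_general (p q : ℝ) (hp : 0 < p) (hq1 : q < 1)
    (a : ℕ → ℝ)
    (ha : ∀ n : ℕ, 1 ≤ n →
      a n = Real.Gamma (p - q + 1) * Real.Gamma (n : ℝ) / Real.Gamma ((n : ℝ) + p - q))
    (ν : ℕ → ℝ) (hν : ∀ n : ℕ, ν n = ∑ k ∈ Finset.Icc 1 n, (a k) ^ 2) :
    (p - q < 1 / 2 →
      Tendsto (fun n : ℕ => ν n / (n : ℝ) ^ (1 - 2 * (p - q))) atTop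
        (𝓝 ((Real.Gamma (p - q + 1)) ^ 2 / (1 - 2 * (p - q))))) ∧
    (p - q = 1 / 2 →
      Tendsto (fun n : ℕ => ν n / Real.log n) atTop (𝓝 (Real.pi / 4))) ∧
    (p - q > 1 / 2 → ∃ C : ℝ, ∀ n : ℕ, ν n ≤ C) := by
  have ha' : ∀ n : ℕ, 1 ≤ n → a n = Gamma (p - q + 1) * Gamma n / Gamma (n + (p - q)) :=
    fun n hn => by rw [ha n hn, add_sub_assoc]
  have hr : -1 < p - q := by linarith
  generalize p - q = r at ha' hr ⊢
  have hν_range : ∀ n, ν n = ∑ i ∈ range n, a (i + 1) ^ 2 := fun n => by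
    rw [hν, ← Ico_add_one_right_eq_Icc, sum_Ico_eq_sum_range, Nat.add_sub_cancel]
    simp only [add_comm]
  have ha_lim : Tendsto (fun n : ℕ => a n * (n : ℝ) ^ r) atTop (𝓝 (Gamma (r + 1))) := by
    refine (mul_one (Gamma (r + 1)) ▸
      (tendsto_Gamma_mul_rpow_div_Gamma_add hr).const_mul _).congr' ?_
    filter_upwards [eventually_ge_atTop 1] with n hn
    rw [ha' n hn]
    ring
  have h_lim : Tendsto (fun i : ℕ => a (i + 1) ^ 2 * ((i : ℝ) + 1) ^ (2 * r)) atTop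
      (𝓝 (Gamma (r + 1) ^ 2)) := by
    refine ((ha_lim.pow 2).comp (tendsto_add_atTop_nat 1)).congr fun i => ?_
    rw [Function.comp_apply, mul_pow, ← rpow_mul_natCast (by positivity), mul_comm (2 : ℝ)]
    push_cast
    rfl
  refine ⟨fun hr_lt => ?_, fun hr_eq => ?_, fun hr_gt => ?_⟩
  · simpa only [hν_range] using tendsto_sum_range_div_rpow (by linarith) h_lim
  · have h_Gamma : Gamma (r + 1) ^ 2 = π / 4 := by
      rw [hr_eq, Gamma_add_one one_half_pos.ne', Gamma_one_half_eq, mul_pow, sq_sqrt pi_pos.le]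
      ring
    rw [h_Gamma, hr_eq, mul_one_div_cancel two_ne_zero] at h_lim
    simpa only [hν_range] using tendsto_sum_range_div_log (by simpa only [rpow_one] using h_lim)
  · have h_summable := summable_of_tendsto_mul_rpow (by linarith) h_lim
    exact ⟨∑' i, a (i + 1) ^ 2, fun n => hν_range n ▸
      h_summable.sum_le_tsum (range n) fun i _ => sq_nonneg _⟩

/-- asymptotics of `νₙ = ∑_{k=1}^n aₖ²` where
`aₙ = Γ(p−q+1)·Γ(n)/Γ(n+p−q)`: diffusive, critical and superdiffusive regimes. -/
theorem nu_asymptotics (p q : ℝ) (hp : 0 < p) (hp1 : p < 1) (hq : 0 < q) (hq1 : q < 1)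
    (a : ℕ → ℝ)
    (ha : ∀ n : ℕ, 1 ≤ n →
      a n = Real.Gamma (p - q + 1) * Real.Gamma (n : ℝ) / Real.Gamma ((n : ℝ) + p - q))
    (ν : ℕ → ℝ) (hν : ∀ n : ℕ, ν n = ∑ k ∈ Finset.Icc 1 n, (a k) ^ 2) :
    (p - q < 1 / 2 →
      Tendsto (fun n : ℕ => ν n / (n : ℝ) ^ (1 - 2 * (p - q))) atTop
        (𝓝 ((Real.Gamma (p - q + 1)) ^ 2 / (1 - 2 * (p - q))))) ∧
    (p - q = 1 / 2 →
      Tendsto (fun n : ℕ => ν n / Real.log n) atTop (𝓝 (Real.pi / 4))) ∧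
    (p - q > 1 / 2 → ∃ C : ℝ, ∀ n : ℕ, ν n ≤ C) :=
  nu_asymptotics_general p q hp hq1 a ha ν hν
end

section
/- For every n ≥ 1, ℙ(X_n ≠ 0) = (p+q)^n, and consequently ℙ(X_n ≠ 0 for infinitely many n) = 0 (i.e. almost surely there exists n₀ such that X_n = 0 for all n > n₀). -/
open MeasureTheory ProbabilityTheory Filter Real
open scoped ENNReal NNReal Topology Classical

noncomputable section

/-!
Conditioning on `σ(X₁, …, Xₙ)` and integrating, the masses `aₙ = ℙ(Xₙ = 1)` and
`bₙ = ℙ(Xₙ = -1)` satisfy `aₙ₊₁ = p aₙ + q bₙ` and `bₙ₊₁ = q aₙ + p bₙ`, so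
`ℙ(Xₙ ≠ 0) = aₙ + bₙ` is multiplied by `p + q` at each step. Since `p + q = 1 - r < 1`,
these probabilities are summable and Borel–Cantelli finishes the proof.
-/

section

variable {Ω : Type*}

lemma measureReal_eq_of_condExp_indicator_ae_eq {m m0 : MeasurableSpace Ω} {μ : Measure[m0] Ω}
    [IsFiniteMeasure μ] (hm : m ≤ m0) {s A B : Set Ω} (hs : MeasurableSet s)
    (hA : MeasurableSet A) (hB : MeasurableSet B) {a b : ℝ}
    (h : μ[s.indicator 1 | m] =ᵐ[μ] fun ω => a * A.indicator 1 ω + b * B.indicator 1 ω) :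
    μ.real s = a * μ.real A + b * μ.real B := by
  have hintA : Integrable (A.indicator (1 : Ω → ℝ)) μ := (integrable_const 1).indicator hA
  have hintB : Integrable (B.indicator (1 : Ω → ℝ)) μ := (integrable_const 1).indicator hB
  calc μ.real s = ∫ ω, s.indicator 1 ω ∂μ := (integral_indicator_one hs).symm
    _ = ∫ ω, μ[s.indicator 1 | m] ω ∂μ := (integral_condExp hm).symm
    _ = ∫ ω, (a * A.indicator 1 ω + b * B.indicator 1 ω) ∂μ := integral_congr_ae h
    _ = a * μ.real A + b * μ.real B := by
      rw [integral_add (hintA.const_mul a) (hintB.const_mul b), integral_const_mul,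
        integral_const_mul, integral_indicator_one hA, integral_indicator_one hB]

variable [MeasurableSpace Ω] {μ : Measure Ω}

lemma measureReal_setOf_ne_zero_eq_add [IsFiniteMeasure μ] {Y : Ω → ℝ} (hY : Measurable Y)
    (hval : ∀ ω, Y ω = 1 ∨ Y ω = -1 ∨ Y ω = 0) :
    μ.real {ω | Y ω ≠ 0} = μ.real {ω | Y ω = 1} + μ.real {ω | Y ω = -1} := by
  have hunion : {ω | Y ω ≠ 0} = {ω | Y ω = 1} ∪ {ω | Y ω = -1} := by
    ext ω
    rcases hval ω with h | h | h <;> simp [h]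
  have hdisj : Disjoint {ω | Y ω = 1} {ω | Y ω = -1} :=
    Set.disjoint_left.2 fun ω (h₁ : Y ω = 1) (h₂ : Y ω = -1) => by norm_num [h₁] at h₂
  rw [hunion, measureReal_union hdisj (hY (measurableSet_singleton _))]

lemma measure_setOf_frequently_eq_zero_of_le_geometric {P : ℕ → Ω → Prop} {c : ℝ≥0∞}
    (hc : c < 1) (h : ∀ n, μ {ω | P n ω} ≤ c ^ n) :
    μ {ω | ∃ᶠ n in atTop, P n ω} = 0 :=
  measure_setOfPred_frequently_eq_zero <|
    ne_top_of_le_ne_top (tsum_geometric_lt_top.2 hc).ne (ENNReal.tsum_le_tsum h)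

end

theorem erwd_recent_step_memory_eventually_zero_general
    {Ω : Type*} [MeasurableSpace Ω] (P : Measure Ω) [IsProbabilityMeasure P]
    (p q r : ℝ) (hp : 0 < p) (hq : 0 < q)
    (hr : 0 < r) (hpqr : p + q + r = 1)
    (X : ℕ → Ω → ℝ) (hXmeas : ∀ n, Measurable (X n))
    (hXval : ∀ n, 1 ≤ n → ∀ ω, X n ω = 1 ∨ X n ω = -1 ∨ X n ω = 0)
    (hX1p : P {ω | X 1 ω = 1} = ENNReal.ofReal p)
    (hX1q : P {ω | X 1 ω = -1} = ENNReal.ofReal q)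
    (hcondp : ∀ n : ℕ, 1 ≤ n →
      P[Set.indicator {ω | X (n + 1) ω = 1} (fun _ => (1 : ℝ)) | sigmaUpTo X n]
        =ᵐ[P] fun ω =>
          p * (if X n ω = 1 then (1 : ℝ) else 0) + q * (if X n ω = -1 then (1 : ℝ) else 0))
    (hcondq : ∀ n : ℕ, 1 ≤ n →
      P[Set.indicator {ω | X (n + 1) ω = -1} (fun _ => (1 : ℝ)) | sigmaUpTo X n]
        =ᵐ[P] fun ω =>
          q * (if X n ω = 1 then (1 : ℝ) else 0) + p * (if X n ω = -1 then (1 : ℝ) else 0))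
    :
    (∀ n : ℕ, 1 ≤ n → P {ω | X n ω ≠ 0} = ENNReal.ofReal ((p + q) ^ n)) ∧
    P {ω | ∃ᶠ n in atTop, X n ω ≠ 0} = 0 := by
  have hlevel (n : ℕ) (c : ℝ) : MeasurableSet {ω | X n ω = c} :=
    hXmeas n (measurableSet_singleton c)
  have hstep (n : ℕ) (c a b : ℝ)
      (h : P[Set.indicator {ω | X (n + 1) ω = c} (fun _ => (1 : ℝ)) | sigmaUpTo X n]
        =ᵐ[P] fun ω =>
          a * (if X n ω = 1 then (1 : ℝ) else 0) + b * (if X n ω = -1 then (1 : ℝ) else 0)) :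
      P.real {ω | X (n + 1) ω = c} = a * P.real {ω | X n ω = 1} + b * P.real {ω | X n ω = -1} :=
    measureReal_eq_of_condExp_indicator_ae_eq
      (measurable_pi_lambda _ fun _ => hXmeas _).comap_le (hlevel _ _) (hlevel _ _) (hlevel _ _)
      (h.trans (.of_eq (by ext; simp [Set.indicator_apply])))
  have hmass : ∀ n, 1 ≤ n → P.real {ω | X n ω = 1} + P.real {ω | X n ω = -1} = (p + q) ^ n := by
    refine Nat.le_induction ?_ fun n hn ih => ?_
    · simp [measureReal_def, hX1p, hX1q, hp.le, hq.le]
    · rw [hstep n 1 p q (hcondp n hn), hstep n (-1) q p (hcondq n hn), pow_succ, ← ih]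
      ring
  have hformula (n : ℕ) (hn : 1 ≤ n) : P {ω | X n ω ≠ 0} = ENNReal.ofReal ((p + q) ^ n) := by
    rw [← ofReal_measureReal, measureReal_setOf_ne_zero_eq_add (hXmeas n) (hXval n hn),
      hmass n hn]
  refine ⟨hformula, measure_setOf_frequently_eq_zero_of_le_geometric
    (c := ENNReal.ofReal (p + q)) (ENNReal.ofReal_lt_one.2 (by linarith)) fun n => ?_⟩
  rcases Nat.eq_zero_or_pos n with rfl | hn
  · simpa using prob_le_one
  · rw [hformula n hn, ENNReal.ofReal_pow (by positivity)]

/-- for the ERWD remembering only the most recent step,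
`ℙ(Xₙ ≠ 0) = (p+q)ⁿ` for every `n ≥ 1`, and almost surely `Xₙ ≠ 0` for only finitely
many `n`. -/
theorem erwd_recent_step_memory_eventually_zero
    {Ω : Type*} [MeasurableSpace Ω] (P : Measure Ω) [IsProbabilityMeasure P]
    (p q r : ℝ) (hp : 0 < p) (hp1 : p < 1) (hq : 0 < q) (hq1 : q < 1)
    (hr : 0 < r) (hr1 : r < 1) (hpqr : p + q + r = 1)
    (X : ℕ → Ω → ℝ) (hXmeas : ∀ n, Measurable (X n))
    (hXval : ∀ n, 1 ≤ n → ∀ ω, X n ω = 1 ∨ X n ω = -1 ∨ X n ω = 0)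
    (hX1p : P {ω | X 1 ω = 1} = ENNReal.ofReal p)
    (hX1q : P {ω | X 1 ω = -1} = ENNReal.ofReal q)
    (hX1r : P {ω | X 1 ω = 0} = ENNReal.ofReal r)
    (hcondp : ∀ n : ℕ, 1 ≤ n →
      P[Set.indicator {ω | X (n + 1) ω = 1} (fun _ => (1 : ℝ)) | sigmaUpTo X n]
        =ᵐ[P] fun ω =>
          p * (if X n ω = 1 then (1 : ℝ) else 0) + q * (if X n ω = -1 then (1 : ℝ) else 0))
    (hcondq : ∀ n : ℕ, 1 ≤ n →
      P[Set.indicator {ω | X (n + 1) ω = -1} (fun _ => (1 : ℝ)) | sigmaUpTo X n]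
        =ᵐ[P] fun ω =>
          q * (if X n ω = 1 then (1 : ℝ) else 0) + p * (if X n ω = -1 then (1 : ℝ) else 0))
    :
    (∀ n : ℕ, 1 ≤ n → P {ω | X n ω ≠ 0} = ENNReal.ofReal ((p + q) ^ n)) ∧
    P {ω | ∃ᶠ n in atTop, X n ω ≠ 0} = 0 :=
  erwd_recent_step_memory_eventually_zero_general P p q r hp hq hr hpqr X hXmeas hXval hX1p hX1q
    hcondp hcondq
end
end
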